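/- Fix an integer n ≥ 2 and constants a₁,…,aₙ ∈ ℂ. For every smooth function f : Ω → ℂ, the exact operator identity Σ_{1 ≤ j < k ≤ n} J_{jk} f + D(Df) + ( Σⱼ₌₁ⁿ aⱼ − ((n−2)/2)² ) f = r² · Hf holds on Ω. In particular, if Hf = 0 on Ω then Σ_{1 ≤ j < k ≤ n} J_{jk} f + D(Df) + ( Σⱼ aⱼ − ((n−2)/2)² ) f = 0 on Ω. -/

import Mathlib

noncomputable section

/-- The domain `Ω = {x ∈ ℝⁿ : x ≠ 0 and xⱼ ≠ 0 for all j}`. -/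
def Omega (n : ℕ) : Set (Fin n → ℝ) := {x | x ≠ 0 ∧ ∀ j, x j ≠ 0}

/-- Partial derivative `∂ⱼ f`. -/
def pd {n : ℕ} (j : Fin n) (f : (Fin n → ℝ) → ℂ) (x : Fin n → ℝ) : ℂ :=
  fderiv ℝ f x (Pi.single j 1)

/-- `r² = Σⱼ xⱼ²`. -/
def r2 {n : ℕ} (x : Fin n → ℝ) : ℝ := ∑ j, (x j) ^ 2

/-- The Euler operator `E = Σⱼ xⱼ ∂ⱼ`. -/
def Eop {n : ℕ} (f : (Fin n → ℝ) → ℂ) (x : Fin n → ℝ) : ℂ :=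
  ∑ j, (x j : ℂ) * pd j f x

/-- The Hamiltonian `Hf = Σⱼ (∂ⱼ²f + (aⱼ/xⱼ²) f)`. -/
def Hop {n : ℕ} (a : Fin n → ℂ) (f : (Fin n → ℝ) → ℂ) (x : Fin n → ℝ) : ℂ :=
  ∑ j, (pd j (pd j f) x + (a j / (x j : ℂ) ^ 2) * f x)

/-- The dilation operator `Df = −Ef − ((n−2)/2) f`. -/
def Dop {n : ℕ} (f : (Fin n → ℝ) → ℂ) (x : Fin n → ℝ) : ℂ :=
  -Eop f x - (((n : ℂ) - 2) / 2) * f x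

/-- `Pⱼf = ∂ⱼ²f + (aⱼ/xⱼ²) f`. -/
def Pop {n : ℕ} (a : Fin n → ℂ) (j : Fin n) (f : (Fin n → ℝ) → ℂ)
    (x : Fin n → ℝ) : ℂ :=
  pd j (pd j f) x + (a j / (x j : ℂ) ^ 2) * f x

/-- The rotation `xⱼ∂ₖ − xₖ∂ⱼ`. -/
def rot {n : ℕ} (j k : Fin n) (f : (Fin n → ℝ) → ℂ) (x : Fin n → ℝ) : ℂ :=
  (x j : ℂ) * pd k f x - (x k : ℂ) * pd j f x

/-- `J_{jk}f = (xⱼ∂ₖ − xₖ∂ⱼ)²f + (aⱼxₖ²/xⱼ² + aₖxⱼ²/xₖ²) f`. -/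
def Jop {n : ℕ} (a : Fin n → ℂ) (j k : Fin n) (f : (Fin n → ℝ) → ℂ)
    (x : Fin n → ℝ) : ℂ :=
  rot j k (rot j k f) x
    + (a j * (x k : ℂ) ^ 2 / (x j : ℂ) ^ 2
        + a k * (x j : ℂ) ^ 2 / (x k : ℂ) ^ 2) * f x

/-- `Mⱼf = (n−2)xⱼ f − r² ∂ⱼf + 2xⱼ Ef`. -/
def Mop {n : ℕ} (j : Fin n) (f : (Fin n → ℝ) → ℂ) (x : Fin n → ℝ) : ℂ :=
  ((n : ℂ) - 2) * (x j : ℂ) * f x - (r2 x : ℂ) * pd j f x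
    + 2 * (x j : ℂ) * Eop f x

/-- `Kⱼf = Mⱼ(Mⱼf) + (aⱼ r⁴/xⱼ²) f`. -/
def Kop {n : ℕ} (a : Fin n → ℂ) (j : Fin n) (f : (Fin n → ℝ) → ℂ)
    (x : Fin n → ℝ) : ℂ :=
  Mop j (Mop j f) x + (a j * (r2 x : ℂ) ^ 2 / (x j : ℂ) ^ 2) * f x

/-- The inversion (Kelvin-type) operator `(Iψ)(x) = r^{2−n} ψ(x/r²)`,
with `r^{2−n} = (r²)^{(2−n)/2}`. -/
def Iop {n : ℕ} (f : (Fin n → ℝ) → ℂ) (x : Fin n → ℝ) : ℂ :=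
  (((r2 x) ^ (((2 : ℝ) - (n : ℝ)) / 2) : ℝ) : ℂ) * f ((r2 x)⁻¹ • x)


open Finset

section Aux

variable {n : ℕ} {x : Fin n → ℝ}

private def coordC {n : ℕ} (k : Fin n) : (Fin n → ℝ) → ℂ := fun y => (y k : ℂ)

private lemma coordC_hasFDeriv (k : Fin n) :
    HasFDerivAt (coordC k) (Complex.ofRealCLM.comp (ContinuousLinearMap.proj k)) x :=
  Complex.ofRealCLM.hasFDerivAt.comp x (hasFDerivAt_apply k x)

private lemma coordC_diff (k : Fin n) : DifferentiableAt ℝ (coordC k) x :=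
  (coordC_hasFDeriv k).differentiableAt

private lemma pd_coordC (j k : Fin n) : pd j (coordC k) x = if k = j then 1 else 0 := by
  rw [pd, (coordC_hasFDeriv k).fderiv]
  simp [Pi.single_apply]
  split <;> simp

private lemma pd_sub {f g : (Fin n → ℝ) → ℂ} (hf : DifferentiableAt ℝ f x)
    (hg : DifferentiableAt ℝ g x) (j : Fin n) :
    pd j (fun y => f y - g y) x = pd j f x - pd j g x := by
  rw [pd, fderiv_fun_sub hf hg]; rfl

private lemma pd_neg {f : (Fin n → ℝ) → ℂ} (j : Fin n) :
    pd j (fun y => -f y) x = -pd j f x := by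
  rw [pd, fderiv_fun_neg]; rfl

private lemma pd_const_mul {f : (Fin n → ℝ) → ℂ} (hf : DifferentiableAt ℝ f x) (c : ℂ)
    (j : Fin n) : pd j (fun y => c * f y) x = c * pd j f x := by
  rw [pd, fderiv_const_mul hf]; rfl

private lemma pd_sum {ι : Type*} (s : Finset ι) {f : ι → (Fin n → ℝ) → ℂ}
    (hf : ∀ i ∈ s, DifferentiableAt ℝ (f i) x) (j : Fin n) :
    pd j (fun y => ∑ i ∈ s, f i y) x = ∑ i ∈ s, pd j (f i) x := by
  rw [pd, fderiv_fun_sum hf]; simp [pd]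

private lemma pd_coord_mul {f : (Fin n → ℝ) → ℂ} (hf : DifferentiableAt ℝ f x) (k j : Fin n) :
    pd j (fun y => (y k : ℂ) * f y) x
      = (if k = j then f x else 0) + (x k : ℂ) * pd j f x := by
  have h2 := fderiv_fun_mul (𝕜 := ℝ) (coordC_diff (x := x) k) hf
  rw [pd, show (fun y => (y k : ℂ) * f y) = fun y => coordC k y * f y from rfl, h2]
  have h := pd_coordC (x := x) j k
  rw [pd] at h
  simp only [ContinuousLinearMap.add_apply, ContinuousLinearMap.smul_apply, smul_eq_mul]
  rw [h, coordC]
  split <;> ring_nf <;> simp [pd, mul_comm]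

private lemma pd_contDiffAt {f : (Fin n → ℝ) → ℂ} (hf : ContDiffAt ℝ (⊤ : ℕ∞) f x) (k : Fin n) :
    ContDiffAt ℝ (⊤ : ℕ∞) (pd k f) x :=
  (ContinuousLinearMap.apply ℝ ℂ (Pi.single k (1:ℝ))).contDiff.contDiffAt.comp x
    (hf.fderiv_right (by simp))

private lemma pd_pd_eq {f : (Fin n → ℝ) → ℂ} (hf : ContDiffAt ℝ (⊤ : ℕ∞) f x) (j k : Fin n) :
    pd j (pd k f) x = fderiv ℝ (fderiv ℝ f) x (Pi.single j 1) (Pi.single k 1) := by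
  have hd : DifferentiableAt ℝ (fderiv ℝ f) x :=
    (hf.fderiv_right (WithTop.coe_le_coe.mpr le_top : (1:WithTop ℕ∞) + 1 ≤ ((⊤ : ℕ∞) : WithTop ℕ∞))).differentiableAt one_ne_zero
  have h : pd k f = fun y => (fderiv ℝ f y) (Pi.single k (1:ℝ)) := rfl
  rw [pd, h, fderiv_clm_apply (u := fun _ => Pi.single k (1:ℝ)) hd (differentiableAt_const _)]
  simp

private lemma pd_comm {f : (Fin n → ℝ) → ℂ} (hf : ContDiffAt ℝ (⊤ : ℕ∞) f x) (j k : Fin n) :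
    pd j (pd k f) x = pd k (pd j f) x := by
  rw [pd_pd_eq hf, pd_pd_eq hf]
  exact (hf.isSymmSndFDerivAt (by rw [minSmoothness_of_isRCLikeNormedField]; exact WithTop.coe_le_coe.mpr le_top)).eq _ _

private lemma pair_sum (F : Fin n → Fin n → ℂ) :
    (∑ j : Fin n, ∑ k ∈ Finset.univ.filter (fun k => j < k), (F j k + F k j))
      = ∑ j : Fin n, ∑ k ∈ Finset.univ.filter (fun k => k ≠ j), F j k := by
  simp only [Finset.sum_filter, Finset.sum_add_distrib]
  rw [Finset.sum_comm (f := fun j k => if j < k then F k j else 0)]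
  rw [← Finset.sum_add_distrib]
  congr 1; ext j
  rw [← Finset.sum_add_distrib]
  congr 1; ext k
  rcases lt_trichotomy j k with h | h | h
  · simp [h, h.ne', not_lt.2 h.le, h.ne]
  · simp [h]
  · simp [h, not_lt.2 h.le, h.ne]

private lemma omega_isOpen (n : ℕ) : IsOpen (Omega n) := by
  have : Omega n = {x : Fin n → ℝ | x ≠ 0} ∩ ⋂ j, {x | x j ≠ 0} := by
    ext x; simp [Omega, Set.mem_iInter]
  rw [this]
  exact (isOpen_ne_fun continuous_id continuous_const).inter
    (isOpen_iInter_of_finite fun j =>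
      isOpen_ne_fun (continuous_apply j) continuous_const)

/-- The auxiliary "half" of the `J`-operator expansion. -/
private def Gaux {n : ℕ} (a : Fin n → ℂ) (f : (Fin n → ℝ) → ℂ) (x : Fin n → ℝ)
    (j k : Fin n) : ℂ :=
  (x j : ℂ)^2 * pd k (pd k f) x - (x j : ℂ) * pd j f x
    - (x j : ℂ) * ((x k : ℂ) * pd j (pd k f) x)
    + (a j / (x j : ℂ)^2 * f x) * (x k : ℂ)^2

end Aux

/-- The exact operator identity
`Σ_{j<k} J_{jk} f + D(Df) + (Σⱼ aⱼ − ((n−2)/2)²) f = r² · Hf` on Ω;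
in particular the left-hand side vanishes on the null space of `H`. -/
theorem sum_J_plus_D2_identity
    (n : ℕ) (hn : 2 ≤ n) (a : Fin n → ℂ)
    (f : (Fin n → ℝ) → ℂ) (hf : ContDiffOn ℝ (⊤ : ℕ∞) f (Omega n)) :
    (∀ x ∈ Omega n,
      (∑ j : Fin n, ∑ k ∈ Finset.univ.filter (fun k => j < k), Jop a j k f x)
        + Dop (Dop f) x
        + ((∑ j : Fin n, a j) - (((n : ℂ) - 2) / 2) ^ 2) * f x
        = (r2 x : ℂ) * Hop a f x) ∧
    ((∀ x ∈ Omega n, Hop a f x = 0) →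
      ∀ x ∈ Omega n,
        (∑ j : Fin n, ∑ k ∈ Finset.univ.filter (fun k => j < k), Jop a j k f x)
          + Dop (Dop f) x
          + ((∑ j : Fin n, a j) - (((n : ℂ) - 2) / 2) ^ 2) * f x = 0) := by
  have main : ∀ x ∈ Omega n,
      (∑ j : Fin n, ∑ k ∈ Finset.univ.filter (fun k => j < k), Jop a j k f x)
        + Dop (Dop f) x
        + ((∑ j : Fin n, a j) - (((n : ℂ) - 2) / 2) ^ 2) * f x
        = (r2 x : ℂ) * Hop a f x := by
    intro x hx
    have hxj : ∀ j, (x j : ℂ) ≠ 0 := fun j => by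
      exact_mod_cast Complex.ofReal_ne_zero.2 (hx.2 j)
    have hfx : ContDiffAt ℝ (⊤ : ℕ∞) f x :=
      hf.contDiffAt ((omega_isOpen n).mem_nhds hx)
    have hdf : DifferentiableAt ℝ f x := hfx.differentiableAt (by simp)
    have hpdd : ∀ k, DifferentiableAt ℝ (pd k f) x :=
      fun k => (pd_contDiffAt hfx k).differentiableAt (by simp)
    have hm : ∀ m l : Fin n, DifferentiableAt ℝ (fun y => (y m : ℂ) * pd l f y) x :=
      fun m l => (coordC_diff m).mul (hpdd l)
    have hE : DifferentiableAt ℝ (Eop f) x := by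
      have h : Eop f = fun y => ∑ k, (y k : ℂ) * pd k f y := rfl
      rw [h]
      exact DifferentiableAt.fun_sum (fun k _ => hm k k)
    -- first derivative of the Euler operator
    have hpdE : ∀ j, pd j (Eop f) x
        = pd j f x + ∑ k, (x k : ℂ) * pd j (pd k f) x := by
      intro j
      have h0 : pd j (Eop f) x = ∑ k, pd j (fun y => (y k : ℂ) * pd k f y) x := by
        have h : Eop f = fun y => ∑ k, (y k : ℂ) * pd k f y := rfl
        rw [h, pd_sum _ (fun k _ => hm k k)]
      rw [h0, Finset.sum_congr rfl (fun k _ => pd_coord_mul (hpdd k) k j),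
        Finset.sum_add_distrib]
      simp
    -- first derivative of the dilation operator
    have hpdD : ∀ j, pd j (Dop f) x
        = -(pd j f x + ∑ k, (x k : ℂ) * pd j (pd k f) x)
          - (((n : ℂ) - 2) / 2) * pd j f x := by
      intro j
      have h : Dop f = fun y => (fun y => -Eop f y) y
          - (fun y => (((n : ℂ) - 2) / 2) * f y) y := rfl
      rw [h, pd_sub (f := fun y => -Eop f y) hE.neg (hdf.const_mul _) j, pd_neg, pd_const_mul hdf, hpdE j]
    -- value of D(Df)
    have hDD : Dop (Dop f) x
        = (∑ j, (x j : ℂ) * pd j f x)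
          + (∑ j, (x j : ℂ) * ∑ k, (x k : ℂ) * pd j (pd k f) x)
          + ((n : ℂ) - 2) * (∑ j, (x j : ℂ) * pd j f x)
          + (((n : ℂ) - 2) / 2) ^ 2 * f x := by
      have h0 : Dop (Dop f) x
          = -(∑ j, (x j : ℂ) * pd j (Dop f) x)
            - (((n : ℂ) - 2) / 2) * (-(∑ j, (x j : ℂ) * pd j f x)
              - (((n : ℂ) - 2) / 2) * f x) := rfl
      rw [h0, Finset.sum_congr rfl (fun j _ => by rw [hpdD j])]
      have h1 : ∑ j, (x j : ℂ) * (-(pd j f x + ∑ k, (x k : ℂ) * pd j (pd k f) x)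
            - (((n : ℂ) - 2) / 2) * pd j f x)
          = -(∑ j, (x j : ℂ) * pd j f x)
            - (∑ j, (x j : ℂ) * ∑ k, (x k : ℂ) * pd j (pd k f) x)
            - (((n : ℂ) - 2) / 2) * ∑ j, (x j : ℂ) * pd j f x := by
        rw [Finset.sum_congr rfl (fun j (_ : j ∈ univ) => show
          (x j : ℂ) * (-(pd j f x + ∑ k, (x k : ℂ) * pd j (pd k f) x)
            - (((n : ℂ) - 2) / 2) * pd j f x)
          = -((x j : ℂ) * pd j f x)
            - (x j : ℂ) * (∑ k, (x k : ℂ) * pd j (pd k f) x)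
            - (((n : ℂ) - 2) / 2) * ((x j : ℂ) * pd j f x) by ring)]
        simp only [Finset.sum_sub_distrib, Finset.sum_neg_distrib, ← Finset.mul_sum]
      rw [h1]; ring
    -- expansion of the square of a rotation
    have hrot : ∀ j k : Fin n, j ≠ k →
        rot j k (rot j k f) x
          = (x j : ℂ)^2 * pd k (pd k f) x + (x k : ℂ)^2 * pd j (pd j f) x
            - (x j : ℂ) * pd j f x - (x k : ℂ) * pd k f x
            - 2 * ((x j : ℂ) * ((x k : ℂ) * pd j (pd k f) x)) := by
      intro j k hjk
      have hpdr : ∀ m, pd m (rot j k f) x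
          = ((if j = m then pd k f x else 0) + (x j : ℂ) * pd m (pd k f) x)
            - ((if k = m then pd j f x else 0) + (x k : ℂ) * pd m (pd j f) x) := by
        intro m
        have h : rot j k f = fun y => (fun y => (y j : ℂ) * pd k f y) y
            - (fun y => (y k : ℂ) * pd j f y) y := rfl
        rw [h, pd_sub (hm j k) (hm k j) m, pd_coord_mul (hpdd k) j m,
          pd_coord_mul (hpdd j) k m]
      have h0 : rot j k (rot j k f) x
          = (x j : ℂ) * pd k (rot j k f) x - (x k : ℂ) * pd j (rot j k f) x := rfl
      rw [h0, hpdr k, hpdr j, if_neg hjk, if_pos rfl, if_pos rfl,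
        if_neg (Ne.symm hjk), pd_comm hfx k j]
      ring
    -- J on a pair equals the symmetrized G-sum
    have hJG : ∀ j k : Fin n, j < k →
        Jop a j k f x = Gaux a f x j k + Gaux a f x k j := by
      intro j k hjk
      have h0 : Jop a j k f x = rot j k (rot j k f) x
          + (a j * (x k : ℂ)^2 / (x j : ℂ)^2 + a k * (x j : ℂ)^2 / (x k : ℂ)^2) * f x := rfl
      rw [h0, hrot j k hjk.ne, Gaux, Gaux, pd_comm hfx k j]
      ring
    -- sum of the J operators
    have hsumJ : (∑ j : Fin n, ∑ k ∈ Finset.univ.filter (fun k => j < k), Jop a j k f x)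
        = ∑ j : Fin n, ((∑ k, Gaux a f x j k) - Gaux a f x j j) := by
      rw [Finset.sum_congr rfl (fun j _ => Finset.sum_congr rfl
        (fun k hk => hJG j k (by simpa using hk))), pair_sum]
      refine Finset.sum_congr rfl (fun j _ => ?_)
      rw [Finset.filter_ne', Finset.sum_erase_eq_sub (Finset.mem_univ j)]
    -- closed form of the inner G-sums
    have hG1 : ∀ j : Fin n, (∑ k, Gaux a f x j k)
        = (x j : ℂ)^2 * (∑ k, pd k (pd k f) x)
          - (n : ℂ) * ((x j : ℂ) * pd j f x)
          - (x j : ℂ) * (∑ k, (x k : ℂ) * pd j (pd k f) x)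
          + (a j / (x j : ℂ)^2 * f x) * (∑ k, (x k : ℂ)^2) := by
      intro j
      simp only [Gaux, Finset.sum_add_distrib, Finset.sum_sub_distrib, ← Finset.mul_sum,
        Finset.sum_const, Finset.card_univ, Fintype.card_fin, nsmul_eq_mul]
      ring
    have hr2 : ((r2 x : ℝ) : ℂ) = ∑ j, (x j : ℂ)^2 := by
      rw [r2]; push_cast; rfl
    have hHop : Hop a f x = ∑ j, (pd j (pd j f) x + a j / (x j : ℂ)^2 * f x) := rfl
    rw [hsumJ, hDD, hHop, hr2,
      Finset.sum_congr rfl (fun j (_ : j ∈ univ) => by rw [hG1 j]),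
      Finset.sum_sub_distrib]
    -- final algebraic identity between single sums
    have hfinal :
        (∑ j : Fin n, ((x j : ℂ)^2 * (∑ k, pd k (pd k f) x)
            - (n : ℂ) * ((x j : ℂ) * pd j f x)
            - (x j : ℂ) * (∑ k, (x k : ℂ) * pd j (pd k f) x)
            + (a j / (x j : ℂ)^2 * f x) * (∑ k, (x k : ℂ)^2)))
          - (∑ j : Fin n, Gaux a f x j j)
          + (∑ j : Fin n, (x j : ℂ) * pd j f x)
          + (∑ j : Fin n, (x j : ℂ) * ∑ k, (x k : ℂ) * pd j (pd k f) x)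
          + ((n : ℂ) - 2) * (∑ j : Fin n, (x j : ℂ) * pd j f x)
          + (∑ j : Fin n, a j) * f x
          - (∑ j : Fin n, (x j : ℂ)^2) * (∑ j : Fin n,
              (pd j (pd j f) x + a j / (x j : ℂ)^2 * f x))
        = 0 := by
      rw [Finset.mul_sum Finset.univ
          (fun j => (pd j (pd j f) x + a j / (x j : ℂ)^2 * f x))
          (∑ j : Fin n, (x j : ℂ)^2),
        Finset.sum_mul Finset.univ a (f x),
        Finset.mul_sum Finset.univ (fun j => (x j : ℂ) * pd j f x) ((n : ℂ) - 2)]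
      simp only [← Finset.sum_sub_distrib, ← Finset.sum_add_distrib]
      rw [Finset.sum_congr rfl (fun j (_ : j ∈ univ) => show _ =
          (x j : ℂ)^2 * (∑ k, pd k (pd k f) x)
            - (∑ k, (x k : ℂ)^2) * pd j (pd j f) x by
        rw [Gaux]; field_simp [hxj j]; ring)]
      rw [Finset.sum_sub_distrib, ← Finset.sum_mul, ← Finset.mul_sum]
      ring
    linear_combination hfinal
  exact ⟨main, fun h x hx => by rw [main x hx, h x hx, mul_zero]⟩
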